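/- Let W = Σ_{k∈M} ∫_{S_k} e^{A(t₁−τ)} b_k b_kᵀ (e^{A(t₁−τ)})ᵀ dτ where the S_k ⊆ [t₀,t₁) are measurable sets. If W is monomial, then for every x̄ ∈ ℝⁿ₊ the nonnegative control u defined componentwise by u_k(τ) = b_kᵀ (e^{A(t₁−τ)})ᵀ W⁻¹ x̄ for τ ∈ S_k (and 0 otherwise) steers the state of x' = Ax + Bu from x(t₀) = 0 to x(t₁) = x̄. -/

import Mathlib

/-!
Write `f_k(τ) = e^{A(t₁-τ)} b_k` and `v = W⁻¹ x̄`. Then `b_kᵀ (e^{A(t₁-τ)})ᵀ v = f_k(τ) ⬝ v`, so the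
control is `u_k(τ) = 1_{S_k}(τ) (f_k(τ) ⬝ v)` and the reached state is
`∑_{k ∈ M} ∫_{S_k} f_k f_kᵀ v = W v = x̄`. The inverse of a monomial matrix is its transpose with
every entry inverted, hence nonnegative; so `v ≥ 0`, and `f_k ≥ 0` because `e^{At}` and `B` are,
which makes the control nonnegative.
-/

open scoped Matrix Classical
open MeasureTheory

attribute [local instance] Matrix.linftyOpNormedRing Matrix.linftyOpNormedAlgebra

/-- A nonnegative square matrix is monomial: each row and each column contains
exactly one strictly positive entry, all other entries being zero. -/
def IsMonomial {n : ℕ} (A : Matrix (Fin n) (Fin n) ℝ) : Prop :=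
  (∀ i j, 0 ≤ A i j) ∧ (∀ i, ∃! j, 0 < A i j) ∧ (∀ j, ∃! i, 0 < A i j)

open Matrix

namespace IsMonomial

variable {n : ℕ} {W : Matrix (Fin n) (Fin n) ℝ}

/-- With the convention `0⁻¹ = 0`, the inverse of a monomial matrix is the entrywise inverse of
its transpose. -/
theorem mul_transpose_map_inv (hW : IsMonomial W) : W * Wᵀ.map (·⁻¹) = 1 := by
  obtain ⟨hnn, hrow, hcol⟩ := hW
  have hzero : ∀ i j, ¬ 0 < W i j → W i j = 0 := fun i j h => le_antisymm (not_lt.1 h) (hnn i j)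
  ext i k
  obtain ⟨j, hj, hj_uniq⟩ := hrow i
  rw [mul_apply, Finset.sum_eq_single j
    (fun j' _ hj' => by rw [hzero i j' (mt (hj_uniq j') hj'), zero_mul]) (by simp)]
  by_cases hik : i = k
  · subst hik
    simp [hj.ne']
  · have hkj : W k j = 0 := hzero k j fun hk => hik ((hcol j).unique hj hk)
    simp [hkj, one_apply_ne hik]

theorem inv_eq (hW : IsMonomial W) : W⁻¹ = Wᵀ.map (·⁻¹) :=
  inv_eq_right_inv hW.mul_transpose_map_inv

theorem inv_nonneg (hW : IsMonomial W) (i j : Fin n) : 0 ≤ W⁻¹ i j := by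
  rw [hW.inv_eq]
  exact _root_.inv_nonneg.2 (hW.1 j i)

theorem mulVec_inv_mulVec (hW : IsMonomial W) (x : Fin n → ℝ) : W *ᵥ (W⁻¹ *ᵥ x) = x := by
  rw [mulVec_mulVec, hW.inv_eq, hW.mul_transpose_map_inv, one_mulVec]

end IsMonomial

theorem Matrix.mulVec_nonneg {R m n : Type*} [Semiring R] [PartialOrder R] [IsOrderedRing R]
    [Fintype n] {A : Matrix m n R} {v : n → R} (hA : ∀ i j, 0 ≤ A i j) (hv : ∀ j, 0 ≤ v j) :
    ∀ i, 0 ≤ (A *ᵥ v) i :=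
  fun i => dotProduct_nonneg_of_nonneg (hA i) hv

theorem Matrix.mulVec_mulVec_eq_sum_smul {R l m n : Type*} [CommSemiring R] [Fintype m]
    [Fintype n] (E : Matrix l m R) (B : Matrix m n R) (u : n → R) :
    E *ᵥ (B *ᵥ u) = ∑ k, u k • E *ᵥ fun p => B p k := by
  ext i
  simp only [mulVec, dotProduct, Finset.sum_apply, Pi.smul_apply, smul_eq_mul, Finset.mul_sum]
  rw [Finset.sum_comm]
  exact Finset.sum_congr rfl fun _ _ => Finset.sum_congr rfl fun _ _ => by ring

theorem intervalIntegral.integral_indicator_eq_setIntegral {E : Type*} [NormedAddCommGroup E]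
    [NormedSpace ℝ E] {a b : ℝ} (hab : a ≤ b) {S : Set ℝ} (hS : MeasurableSet S)
    (hSab : S ⊆ Set.Icc a b) (g : ℝ → E) :
    ∫ τ in a..b, S.indicator g τ = ∫ τ in S, g τ := by
  rw [intervalIntegral.integral_of_le hab, setIntegral_indicator hS]
  refine setIntegral_congr_set ?_
  have h := ae_eq_set_inter (Ioc_ae_eq_Icc (a := a) (b := b) (μ := volume)) (ae_eq_refl S)
  rwa [Set.inter_eq_right.2 hSab] at h

theorem integral_dotProduct_smul_eq_mulVec {X ι : Type*} [MeasurableSpace X] {μ : Measure X}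
    [Fintype ι] {f : X → ι → ℝ} (hf : ∀ i j, Integrable (fun x => f x i * f x j) μ)
    (v : ι → ℝ) :
    ∫ x, (f x ⬝ᵥ v) • f x ∂μ = (of fun i j => ∫ x, f x i * f x j ∂μ) *ᵥ v := by
  have hterm : ∀ x i, ((f x ⬝ᵥ v) • f x) i = ∑ j, f x i * f x j * v j := fun x i => by
    simp only [Pi.smul_apply, smul_eq_mul, dotProduct, Finset.sum_mul]
    exact Finset.sum_congr rfl fun _ _ => by ring
  have hint : ∀ i j, Integrable (fun x => f x i * f x j * v j) μ := fun i j => (hf i j).mul_const _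
  ext i
  rw [eval_integral fun i => by
    simpa only [hterm] using integrable_finsetSum _ fun j _ => hint i j]
  simp only [hterm, integral_finsetSum _ fun j _ => hint i j, integral_mul_const]
  rfl

noncomputable def gramian {ι κ : Type*} (M : Finset κ) (S : κ → Set ℝ) (f : κ → ℝ → ι → ℝ) :
    Matrix ι ι ℝ :=
  of fun i j => ∑ k ∈ M, ∫ τ in S k, f k τ i * f k τ j

theorem intervalIntegral_sum_indicator_smul_eq_gramian_mulVec {ι κ : Type*} [Fintype ι]
    {a b : ℝ} (hab : a ≤ b) (M : Finset κ) {S : κ → Set ℝ} (hS : ∀ k, MeasurableSet (S k))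
    (hSab : ∀ k, S k ⊆ Set.Icc a b) {f : κ → ℝ → ι → ℝ} (hf : ∀ k, Continuous (f k))
    (v : ι → ℝ) :
    ∫ τ in a..b, ∑ k ∈ M, (S k).indicator (fun τ => (f k τ ⬝ᵥ v) • f k τ) τ =
      gramian M S f *ᵥ v := by
  have hg : ∀ k, Continuous fun τ => (f k τ ⬝ᵥ v) • f k τ := fun k =>
    ((hf k).dotProduct continuous_const).smul (hf k)
  have hfint : ∀ k i j, IntegrableOn (fun τ => f k τ i * f k τ j) (S k) := fun k i j =>
    (Continuous.integrableOn_Icc (by fun_prop)).mono_set (hSab k)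
  rw [intervalIntegral.integral_finsetSum fun k _ => intervalIntegrable_iff.2
      ((intervalIntegrable_iff.1 ((hg k).intervalIntegrable a b)).indicator (hS k)),
    Finset.sum_congr rfl fun k _ =>
      intervalIntegral.integral_indicator_eq_setIntegral hab (hS k) (hSab k) _,
    Finset.sum_congr rfl fun k _ => integral_dotProduct_smul_eq_mulVec (hfint k) v,
    ← sum_mulVec]
  congr 1
  ext i j
  simp only [gramian, of_apply, Matrix.sum_apply]

theorem modified_gram_monomial_implies_steering (n m : ℕ)
    (A : Matrix (Fin n) (Fin n) ℝ) (B : Matrix (Fin n) (Fin m) ℝ)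
    (hA : ∀ t : ℝ, 0 ≤ t → ∀ i j, 0 ≤ NormedSpace.exp (t • A) i j)
    (hB : ∀ i j, 0 ≤ B i j)
    (t₀ t₁ : ℝ) (ht : t₀ < t₁)
    (M : Finset (Fin m)) (S : Fin m → Set ℝ)
    (hSmeas : ∀ k, MeasurableSet (S k)) (hSsub : ∀ k, S k ⊆ Set.Ico t₀ t₁)
    (W : Matrix (Fin n) (Fin n) ℝ)
    (hW : ∀ i j, W i j = ∑ k ∈ M, ∫ τ in S k,
      ((NormedSpace.exp ((t₁ - τ) • A)).mulVec fun p => B p k) i *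
        ((NormedSpace.exp ((t₁ - τ) • A)).mulVec fun p => B p k) j)
    (hWmono : IsMonomial W) :
    ∀ xbar : Fin n → ℝ, (∀ i, 0 ≤ xbar i) →
      (∀ (k : Fin m) (τ : ℝ), 0 ≤
        (if k ∈ M ∧ τ ∈ S k then
          (fun p => B p k) ⬝ᵥ (NormedSpace.exp ((t₁ - τ) • A))ᵀ.mulVec (W⁻¹.mulVec xbar)
         else 0)) ∧
      (∫ τ in t₀..t₁, (NormedSpace.exp ((t₁ - τ) • A)).mulVec (B.mulVec fun k =>
          if k ∈ M ∧ τ ∈ S k then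
            (fun p => B p k) ⬝ᵥ (NormedSpace.exp ((t₁ - τ) • A))ᵀ.mulVec (W⁻¹.mulVec xbar)
          else 0)) = xbar := by
  intro xbar hxbar
  set f : Fin m → ℝ → Fin n → ℝ := fun k τ => NormedSpace.exp ((t₁ - τ) • A) *ᵥ fun p => B p k
  set v := W⁻¹ *ᵥ xbar
  have hf : ∀ k, Continuous (f k) := fun k =>
    (NormedSpace.exp_continuous.comp (by fun_prop)).matrix_mulVec continuous_const
  have hcontrol : ∀ k τ,
      (fun p => B p k) ⬝ᵥ (NormedSpace.exp ((t₁ - τ) • A))ᵀ *ᵥ v = f k τ ⬝ᵥ v := fun k τ => by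
    rw [dotProduct_mulVec, vecMul_transpose]
  refine ⟨fun k τ => ?_, ?_⟩
  · split_ifs with h
    · rw [hcontrol]
      exact dotProduct_nonneg_of_nonneg
        (mulVec_nonneg (hA _ (sub_nonneg.2 (hSsub k h.2).2.le)) (hB · k))
        (mulVec_nonneg hWmono.inv_nonneg hxbar)
    · exact le_rfl
  calc _ = ∫ τ in t₀..t₁, ∑ k ∈ M, (S k).indicator (fun τ => (f k τ ⬝ᵥ v) • f k τ) τ := by
        congr 1
        funext τ
        rw [mulVec_mulVec_eq_sum_smul]
        simp only [Set.indicator_apply, ite_smul, zero_smul, hcontrol, ite_and]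
        rw [Finset.sum_ite_mem, Finset.univ_inter]
    _ = gramian M S f *ᵥ v := intervalIntegral_sum_indicator_smul_eq_gramian_mulVec ht.le M
        hSmeas (fun k => (hSsub k).trans Set.Ico_subset_Icc_self) hf v
    _ = W *ᵥ v := by rw [show W = gramian M S f from Matrix.ext hW]
    _ = xbar := hWmono.mulVec_inv_mulVec xbar
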